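/- arXiv:2007.02864 — 3 statements merged into one kernel-verified Lean document; each statement's English description precedes it below -/
import Mathlib

section
/- If α is a continuous real-valued function on [a,b] such that ∫_a^b α(x)h'(x) dx = 0 for every continuously differentiable function h on [a,b] with h(a) = h(b) = 0, then α is constant on [a,b]. -/
open MeasureTheory Set intervalIntegral

theorem du_bois_reymond_lemma
    (a b : ℝ) (hab : a < b) (α : ℝ → ℝ)
    (hα : ContinuousOn α (Set.Icc a b))
    (H : ∀ h h' : ℝ → ℝ,
      (∀ x ∈ Set.Icc a b, HasDerivAt h (h' x) x) →
      ContinuousOn h' (Set.Icc a b) →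
      h a = 0 → h b = 0 →
      ∫ x in a..b, α x * h' x = 0) :
    ∃ c : ℝ, ∀ x ∈ Set.Icc a b, α x = c := by
  set c : ℝ := (∫ x in a..b, α x) / (b - a) with hc
  refine ⟨c, ?_⟩
  -- extend α continuously to ℝ
  set αe : ℝ → ℝ := fun x => α (projIcc a b hab.le x) with hαe
  have hαe_cont : Continuous αe := hα.restrict.comp continuous_projIcc
  have hαe_eq : ∀ x ∈ Set.Icc a b, αe x = α x := fun x hx => by
    simp [hαe, projIcc_of_mem hab.le hx]
  set g : ℝ → ℝ := fun x => αe x - c with hg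
  have hg_cont : Continuous g := hαe_cont.sub continuous_const
  have hg_eq : ∀ x ∈ Set.Icc a b, g x = α x - c := fun x hx => by
    simp [hg, hαe_eq x hx]
  have hint : IntervalIntegrable α volume a b :=
    (hα.mono (by rw [uIcc_of_le hab.le])).intervalIntegrable
  have hint_g : IntervalIntegrable g volume a b := hg_cont.intervalIntegrable _ _
  have hgint : ∫ x in a..b, g x = 0 := by
    have h1 : ∫ x in a..b, g x = (∫ x in a..b, α x) - (b - a) * c := by
      rw [intervalIntegral.integral_congr (g := fun x => α x - c)
        (fun x hx => hg_eq x (by rwa [uIcc_of_le hab.le] at hx)),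
        intervalIntegral.integral_sub hint (intervalIntegrable_const),
        intervalIntegral.integral_const, smul_eq_mul]
    rw [h1, hc, mul_div_cancel₀ _ (sub_ne_zero.mpr hab.ne'), sub_self]
  set h : ℝ → ℝ := fun x => ∫ t in a..x, g t with hh
  have hderiv : ∀ x ∈ Set.Icc a b, HasDerivAt h (g x) x := fun x _ =>
    (hg_cont.integral_hasStrictDerivAt a x).hasDerivAt
  have hha : h a = 0 := by simp [hh]
  have hhb : h b = 0 := by simp [hh, hgint]
  have key : ∫ x in a..b, α x * g x = 0 :=
    H h g hderiv hg_cont.continuousOn hha hhb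
  -- ∫ (α - c)^2 = 0
  have hsq : ∫ x in a..b, (α x - c) ^ 2 = 0 := by
    have e1 : ∀ x ∈ Set.uIcc a b, (α x - c) ^ 2 = α x * g x - c * g x := by
      intro x hx
      rw [uIcc_of_le hab.le] at hx
      rw [hg_eq x hx]; ring
    rw [intervalIntegral.integral_congr e1,
      intervalIntegral.integral_sub ((hint.mul_continuousOn hg_cont.continuousOn))
        (hint_g.const_mul c),
      key, intervalIntegral.integral_const_mul, hgint]
    ring
  have hsq_cont : ContinuousOn (fun x => (α x - c) ^ 2) (Set.Icc a b) :=
    ((hα.sub continuousOn_const).pow 2)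
  -- from integral zero and nonneg, conclude ae zero on Icc
  have hae : (fun x => (α x - c) ^ 2) =ᵐ[volume.restrict (Set.Icc a b)] 0 := by
    have hInt : IntegrableOn (fun x => (α x - c) ^ 2) (Set.Icc a b) volume :=
      hsq_cont.integrableOn_Icc
    have h0 : ∫ x in Set.Icc a b, (α x - c) ^ 2 = 0 := by
      rw [integral_Icc_eq_integral_Ioc]
      rwa [intervalIntegral.integral_of_le hab.le] at hsq
    exact (MeasureTheory.setIntegral_eq_zero_iff_of_nonneg_ae
      (Filter.Eventually.of_forall fun x => sq_nonneg _) hInt).mp h0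
  have heq : Set.EqOn (fun x => (α x - c) ^ 2) 0 (Set.Icc a b) :=
    Measure.eqOn_Icc_of_ae_eq volume hab.ne hae hsq_cont continuousOn_const
  intro x hx
  have h2 := heq hx
  simp only [Pi.zero_apply] at h2
  nlinarith [sq_nonneg (α x - c)]
end

section
/- If α and β are continuous real-valued functions on [a,b] such that ∫_a^b (α(x)h(x) + β(x)h'(x)) dx = 0 for every continuously differentiable function h on [a,b] with h(a) = h(b) = 0, then β is differentiable on [a,b] and β'(x) = α(x) for all x in [a,b]. -/
open intervalIntegral MeasureTheory Set

theorem combined_fundamental_lemma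
    (a b : ℝ) (hab : a < b) (α β : ℝ → ℝ)
    (hα : ContinuousOn α (Set.Icc a b))
    (hβ : ContinuousOn β (Set.Icc a b))
    (H : ∀ h h' : ℝ → ℝ,
      (∀ x ∈ Set.Icc a b, HasDerivAt h (h' x) x) →
      ContinuousOn h' (Set.Icc a b) →
      h a = 0 → h b = 0 →
      ∫ x in a..b, (α x * h x + β x * h' x) = 0) :
    ∀ x ∈ Set.Icc a b, HasDerivWithinAt β (α x) (Set.Icc a b) x := by
  -- clamp to [a,b]
  set p : ℝ → ℝ := fun x => max a (min x b) with hp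
  have hpmem : ∀ x, p x ∈ Set.Icc a b :=
    fun x => ⟨le_max_left _ _, max_le hab.le (min_le_right _ _)⟩
  have hpid : ∀ x ∈ Set.Icc a b, p x = x := by
    intro x hx
    simp [hp, min_eq_left hx.2, max_eq_right hx.1]
  have hpcont : Continuous p := by fun_prop
  set φ : ℝ → ℝ := fun x => α (p x) with hφdef
  set ψ : ℝ → ℝ := fun x => β (p x) with hψdef
  have hφ : Continuous φ := hα.comp_continuous hpcont hpmem
  have hψ : Continuous ψ := hβ.comp_continuous hpcont hpmem
  have hφeq : ∀ x ∈ Set.Icc a b, φ x = α x := fun x hx => by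
    simp only [hφdef, hpid x hx]
  have hψeq : ∀ x ∈ Set.Icc a b, ψ x = β x := fun x hx => by
    simp only [hψdef, hpid x hx]
  -- antiderivative of φ
  set A : ℝ → ℝ := fun x => ∫ t in a..x, φ t with hAdef
  have hA : ∀ x, HasDerivAt A (φ x) x := fun x =>
    integral_hasDerivAt_right (hφ.intervalIntegrable _ _)
      hφ.aestronglyMeasurable.stronglyMeasurableAtFilter hφ.continuousAt
  have hAcont : Continuous A := continuous_iff_continuousAt.2 fun x => (hA x).continuousAt
  -- the constant and the test function
  set c : ℝ := (∫ t in a..b, (ψ t - A t)) / (b - a) with hcdef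
  set g : ℝ → ℝ := fun x => ψ x - A x - c with hgdef
  have hg : Continuous g := by fun_prop
  set h : ℝ → ℝ := fun x => ∫ t in a..x, g t with hhdef
  have hh : ∀ x, HasDerivAt h (g x) x := fun x =>
    integral_hasDerivAt_right (hg.intervalIntegrable _ _)
      hg.aestronglyMeasurable.stronglyMeasurableAtFilter hg.continuousAt
  have hha : h a = 0 := integral_same
  have hgint : ∫ t in a..b, g t = 0 := by
    have h1 : ∫ t in a..b, g t = (∫ t in a..b, (ψ t - A t)) - ∫ t in a..b, c := by
      rw [← intervalIntegral.integral_sub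
        (by apply Continuous.intervalIntegrable; fun_prop)
        (by apply Continuous.intervalIntegrable; fun_prop)]
    have hba : b - a ≠ 0 := sub_ne_zero.2 hab.ne'
    rw [h1, intervalIntegral.integral_const, smul_eq_mul, hcdef,
      mul_div_cancel₀ _ hba, sub_self]
  have hhb : h b = 0 := hgint
  -- apply the hypothesis
  have E1 : ∫ x in a..b, (α x * h x + β x * g x) = 0 :=
    H h g (fun x _ => hh x) hg.continuousOn hha hhb
  have E1' : ∫ x in a..b, (φ x * h x + ψ x * g x) = 0 := by
    rw [intervalIntegral.integral_congr (g := fun x => α x * h x + β x * g x) ?_]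
    · exact E1
    · intro x hx
      rw [Set.uIcc_of_le hab.le] at hx
      simp only [hφeq x hx, hψeq x hx]
  -- integration by parts
  have E2 : ∫ x in a..b, (φ x * h x + A x * g x) = 0 := by
    have := integral_eq_sub_of_hasDerivAt (a := a) (b := b)
      (f := fun x => A x * h x) (f' := fun x => φ x * h x + A x * g x)
      (fun x _ => (hA x).mul (hh x)) (by apply Continuous.intervalIntegrable; fun_prop)
    rw [this]
    rw [hha, hhb]
    ring
  -- combine
  have E3 : ∫ x in a..b, (ψ x - A x) * g x = 0 := by
    have h1 : ∫ x in a..b, (ψ x - A x) * g x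
        = (∫ x in a..b, (φ x * h x + ψ x * g x)) - ∫ x in a..b, (φ x * h x + A x * g x) := by
      rw [← intervalIntegral.integral_sub (by apply Continuous.intervalIntegrable; fun_prop)
        (by apply Continuous.intervalIntegrable; fun_prop)]
      congr 1
      ext x
      ring
    rw [h1, E1', E2, sub_zero]
  have E4 : ∫ x in a..b, g x * g x = 0 := by
    have h1 : ∫ x in a..b, g x * g x
        = (∫ x in a..b, (ψ x - A x) * g x) - c * ∫ x in a..b, g x := by
      rw [← intervalIntegral.integral_const_mul,
        ← intervalIntegral.integral_sub (by apply Continuous.intervalIntegrable; fun_prop)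
          (by apply Continuous.intervalIntegrable; fun_prop)]
      congr 1
      ext x
      rw [hgdef]
      ring
    rw [h1, E3, hgint, mul_zero, sub_zero]
  -- the squared integral function vanishes on [a,b]
  set G : ℝ → ℝ := fun x => ∫ t in a..x, g t * g t with hGdef
  have hG : ∀ x, HasDerivAt G (g x * g x) x := fun x =>
    integral_hasDerivAt_right ((hg.mul hg).intervalIntegrable _ _)
      (hg.mul hg).aestronglyMeasurable.stronglyMeasurableAtFilter (hg.mul hg).continuousAt
  have hG0 : ∀ x ∈ Set.Icc a b, G x = 0 := by
    intro x hx
    have h1 : 0 ≤ G x :=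
      intervalIntegral.integral_nonneg hx.1 (fun t _ => mul_self_nonneg _)
    have h2 : G x + ∫ t in x..b, g t * g t = G b :=
      intervalIntegral.integral_add_adjacent_intervals
        ((hg.mul hg).intervalIntegrable _ _) ((hg.mul hg).intervalIntegrable _ _)
    have h3 : 0 ≤ ∫ t in x..b, g t * g t :=
      intervalIntegral.integral_nonneg hx.2 (fun t _ => mul_self_nonneg _)
    have h4 : G b = 0 := E4
    linarith
  -- hence g = 0 on [a,b]
  have hgzero : ∀ x ∈ Set.Icc a b, g x = 0 := by
    intro x hx
    have h1 : HasDerivWithinAt G (g x * g x) (Set.Icc a b) x := (hG x).hasDerivWithinAt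
    have h2 : HasDerivWithinAt G 0 (Set.Icc a b) x :=
      (hasDerivWithinAt_const x _ (0 : ℝ)).congr hG0 (hG0 x hx)
    have := UniqueDiffWithinAt.eq_deriv _ (uniqueDiffOn_Icc hab x hx) h1 h2
    exact mul_self_eq_zero.mp this
  -- conclude
  intro x hx
  have h1 : HasDerivWithinAt (fun y => A y + c) (φ x) (Set.Icc a b) x :=
    ((hA x).add_const c).hasDerivWithinAt
  have h2 : HasDerivWithinAt β (φ x) (Set.Icc a b) x := by
    apply h1.congr
    · intro y hy
      have h5 : ψ y - A y - c = 0 := hgzero y hy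
      have h6 : ψ y = β y := hψeq y hy
      linarith
    · have h5 : ψ x - A x - c = 0 := hgzero x hx
      have h6 : ψ x = β x := hψeq x hx
      linarith
  rwa [hφeq x hx] at h2
end

section
/- Let F(x,y,p) be C² in all arguments and let y : [a,b] → ℝ be a C² function with y(a) = A, y(b) = B. If y minimizes the functional J[y] = ∫_a^b F(x, y(x), y'(x)) dx among all C² functions satisfying the boundary conditions (with respect to the C¹ norm), then y satisfies the Euler-Lagrange equation F_y(x, y, y') - d/dx [F_{y'}(x, y, y')] = 0 for all x in [a,b]. -/
open Set MeasureTheory intervalIntegral Metric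


/-- Derivative of the slice `s ↦ F (x, s, p)`. -/
lemma slice2_hasDerivAt (F : ℝ × ℝ × ℝ → ℝ) (hF : Differentiable ℝ F) (x s p : ℝ) :
    HasDerivAt (fun u => F (x, u, p)) (fderiv ℝ F (x, s, p) (0, 1, 0)) s := by
  have hin : HasDerivAt (fun u : ℝ => ((x : ℝ), u, p)) ((0 : ℝ), (1 : ℝ), (0 : ℝ)) s :=
    (hasDerivAt_const s x).prodMk ((hasDerivAt_id s).prodMk (hasDerivAt_const s p))
  exact (hF (x, s, p)).hasFDerivAt.comp_hasDerivAt s hin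

/-- Derivative of the slice `u ↦ F (x, s, u)`. -/
lemma slice3_hasDerivAt (F : ℝ × ℝ × ℝ → ℝ) (hF : Differentiable ℝ F) (x s p : ℝ) :
    HasDerivAt (fun u => F (x, s, u)) (fderiv ℝ F (x, s, p) (0, 0, 1)) p := by
  have hin : HasDerivAt (fun u : ℝ => ((x : ℝ), s, u)) ((0 : ℝ), (0 : ℝ), (1 : ℝ)) p :=
    (hasDerivAt_const p x).prodMk ((hasDerivAt_const p s).prodMk (hasDerivAt_id p))
  exact (hF (x, s, p)).hasFDerivAt.comp_hasDerivAt p hin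

lemma fderiv_dir (F : ℝ × ℝ × ℝ → ℝ) (q : ℝ × ℝ × ℝ) (u v : ℝ) :
    fderiv ℝ F q (0, u, v)
      = u * fderiv ℝ F q (0, 1, 0) + v * fderiv ℝ F q (0, 0, 1) := by
  have h : ((0 : ℝ), u, v) = u • ((0 : ℝ), (1 : ℝ), (0 : ℝ)) + v • ((0 : ℝ), (0 : ℝ), (1 : ℝ)) := by
    simp [Prod.ext_iff]
  rw [h, map_add, ContinuousLinearMap.map_smul, ContinuousLinearMap.map_smul,
    smul_eq_mul, smul_eq_mul]

/-- Derivative in `t` of `t ↦ F (x, c + t*u, d + t*v)`. -/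
lemma var_hasDerivAt (F : ℝ × ℝ × ℝ → ℝ) (hF : Differentiable ℝ F) (x c d u v t : ℝ) :
    HasDerivAt (fun t => F (x, c + t * u, d + t * v))
      (fderiv ℝ F (x, c + t * u, d + t * v) (0, u, v)) t := by
  have hin : HasDerivAt (fun t : ℝ => ((x : ℝ), c + t * u, d + t * v)) ((0 : ℝ), u, v) t := by
    have h1 : HasDerivAt (fun t : ℝ => c + t * u) u t := by
      simpa using ((hasDerivAt_id t).mul_const u).const_add c
    have h2 : HasDerivAt (fun t : ℝ => d + t * v) v t := by
      simpa using ((hasDerivAt_id t).mul_const v).const_add d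
    exact (hasDerivAt_const t x).prodMk (h1.prodMk h2)
  exact (hF _).hasFDerivAt.comp_hasDerivAt t hin

lemma fund_pos (a b : ℝ) (hab : a < b) (h : ℝ → ℝ) (hc : Continuous h)
    (x0 : ℝ) (hx0 : x0 ∈ Icc a b) (hpos : 0 < h x0) :
    ∃ η : ℝ → ℝ, ContDiff ℝ 2 η ∧ η a = 0 ∧ η b = 0 ∧ 0 < ∫ x in a..b, h x * η x := by
  set s := h x0 with hs
  set U : Set ℝ := {x | s / 2 < h x} with hU
  have hUopen : IsOpen U := isOpen_lt continuous_const hc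
  have hx0U : x0 ∈ U := by simp only [hU, mem_setOf_eq]; linarith
  -- find an interior point x1 ∈ U ∩ Ioo a b
  have hx0cl : x0 ∈ closure (Ioo a b) := by
    rw [closure_Ioo hab.ne]; exact hx0
  obtain ⟨x1, hx1U, hx1I⟩ : (U ∩ Ioo a b).Nonempty := by
    rcases mem_closure_iff_nhds.1 hx0cl U (hUopen.mem_nhds hx0U) with ⟨x1, hx1⟩
    exact ⟨x1, hx1.1, hx1.2⟩
  obtain ⟨r, hr, hball⟩ : ∃ r > 0, ball x1 r ⊆ U ∩ Ioo a b :=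
    Metric.isOpen_iff.1 (hUopen.inter isOpen_Ioo) x1 ⟨hx1U, hx1I⟩
  set f : ContDiffBump x1 := ⟨r / 2, r, by positivity, by linarith⟩
  refine ⟨fun x => f x, f.contDiff, ?_, ?_, ?_⟩
  · refine f.zero_of_le_dist ?_
    by_contra hcon
    push_neg at hcon
    have : a ∈ ball x1 r := by simpa [mem_ball, dist_comm] using hcon
    exact absurd (hball this).2.1 (lt_irrefl a)
  · refine f.zero_of_le_dist ?_
    by_contra hcon
    push_neg at hcon
    have : b ∈ ball x1 r := by simpa [mem_ball, dist_comm] using hcon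
    exact absurd (hball this).2.2 (lt_irrefl b)
  · -- positivity of the integral
    set η : ℝ → ℝ := fun x => f x with hη
    have hηc : Continuous η := (f.contDiff (n := 2)).continuous
    have hnonneg : ∀ x, 0 ≤ h x * η x := by
      intro x
      rcases eq_or_ne (η x) 0 with h0 | h0
      · simp [h0]
      · have hxsupp : x ∈ ball x1 r := by
          have : x ∈ Function.support η := h0
          rwa [hη, f.support_eq] at this
        have : s / 2 < h x := (hball hxsupp).1
        have hspos : 0 < s / 2 := by positivity
        exact mul_nonneg (by linarith) (f.nonneg)
    set c := x1 - r / 2 with hcdef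
    set d := x1 + r / 2 with hddef
    have hsub : Icc c d ⊆ ball x1 r := by
      intro x hx
      obtain ⟨hx1', hx2'⟩ := hx
      rw [mem_ball, Real.dist_eq, abs_lt]
      rw [hcdef] at hx1'; rw [hddef] at hx2'
      constructor <;> linarith
    have hac : a < c := (hball (hsub ⟨le_rfl, by rw [hcdef, hddef]; linarith⟩)).2.1
    have hdb : d < b := (hball (hsub ⟨by rw [hcdef, hddef]; linarith, le_rfl⟩)).2.2
    have hcd : c ≤ d := by rw [hcdef, hddef]; linarith
    have hint : ∀ u v : ℝ, IntervalIntegrable (fun x => h x * η x) volume u v :=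
      fun u v => (hc.mul hηc).intervalIntegrable u v
    have hsplit : (∫ x in a..b, h x * η x)
        = (∫ x in a..c, h x * η x) + (∫ x in c..d, h x * η x) + (∫ x in d..b, h x * η x) := by
      rw [integral_add_adjacent_intervals (hint a c) (hint c d),
        integral_add_adjacent_intervals (hint a d) (hint d b)]
    have h1 : 0 ≤ ∫ x in a..c, h x * η x :=
      intervalIntegral.integral_nonneg hac.le (fun x _ => hnonneg x)
    have h3 : 0 ≤ ∫ x in d..b, h x * η x :=
      intervalIntegral.integral_nonneg hdb.le (fun x _ => hnonneg x)
    have h2 : r * (s / 2) ≤ ∫ x in c..d, h x * η x := by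
      have hmono : (∫ x in c..d, (s / 2 : ℝ)) ≤ ∫ x in c..d, h x * η x := by
        refine intervalIntegral.integral_mono_on hcd (intervalIntegrable_const) (hint c d) ?_
        intro x hx
        have hxball : x ∈ ball x1 r := hsub hx
        have hη1 : η x = 1 := by
          apply f.one_of_mem_closedBall
          obtain ⟨hx1', hx2'⟩ := hx
          rw [mem_closedBall, Real.dist_eq, abs_le]
          rw [hcdef] at hx1'; rw [hddef] at hx2'
          constructor <;> linarith
        rw [hη1, mul_one]
        exact ((hball hxball).1).le
      calc r * (s / 2) = (d - c) • (s / 2) := by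
            rw [hcdef, hddef, smul_eq_mul]; ring
        _ = ∫ x in c..d, (s / 2 : ℝ) := (intervalIntegral.integral_const _).symm
        _ ≤ _ := hmono
    have : 0 < r * (s / 2) := by positivity
    rw [hsplit]; linarith

lemma fund_lemma (a b : ℝ) (hab : a < b) (h : ℝ → ℝ) (hc : Continuous h)
    (hint : ∀ η : ℝ → ℝ, ContDiff ℝ 2 η → η a = 0 → η b = 0 →
      (∫ x in a..b, h x * η x) = 0) :
    ∀ x ∈ Icc a b, h x = 0 := by
  intro x0 hx0
  by_contra hne
  rcases lt_or_gt_of_ne hne with hlt | hgt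
  · obtain ⟨η, hη, hηa, hηb, hpos⟩ := fund_pos a b hab (fun x => -h x) (hc.neg) x0 hx0 (by simp; linarith)
    have := hint η hη hηa hηb
    have : (∫ x in a..b, -h x * η x) = 0 := by
      have := hint η hη hηa hηb
      calc (∫ x in a..b, -h x * η x) = -∫ x in a..b, h x * η x := by
            rw [← intervalIntegral.integral_neg]; congr 1; ext x; ring
        _ = 0 := by rw [this]; ring
    linarith
  · obtain ⟨η, hη, hηa, hηb, hpos⟩ := fund_pos a b hab h hc x0 hx0 hgt
    have := hint η hη hηa hηb
    linarith

theorem euler_lagrange_necessary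
    (a b A B : ℝ) (hab : a < b)
    (F : ℝ × ℝ × ℝ → ℝ) (hF : ContDiff ℝ 2 F)
    (y : ℝ → ℝ) (hy : ContDiff ℝ 2 y)
    (hA : y a = A) (hB : y b = B)
    (hmin : ∃ ε > 0, ∀ z : ℝ → ℝ, ContDiff ℝ 2 z → z a = A → z b = B →
      (⨆ x : Set.Icc a b, |y x - z x|) + (⨆ x : Set.Icc a b, |deriv y x - deriv z x|) < ε →
      (∫ x in a..b, F (x, y x, deriv y x)) ≤ ∫ x in a..b, F (x, z x, deriv z x)) :
    ∀ x ∈ Set.Icc a b,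
      deriv (fun s => F (x, s, deriv y x)) (y x)
        - deriv (fun t => deriv (fun p => F (t, y t, p)) (deriv y t)) x = 0 := by
  obtain ⟨ε, εpos, hmin⟩ := hmin
  have h2eq : ((1 : WithTop ℕ∞) + 1) = 2 := by norm_num
  have hy1 : ContDiff ℝ 1 y := hy.of_le (by norm_num)
  have hy' : ContDiff ℝ (1 + 1) y := by rw [h2eq]; exact hy
  have hdy1 : ContDiff ℝ 1 (deriv y) := (contDiff_succ_iff_deriv.1 hy').2.2
  have hFd : Differentiable ℝ F := hF.differentiable (by norm_num)
  have hydiff : Differentiable ℝ y := hy.differentiable (by norm_num)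
  set γ : ℝ → ℝ × ℝ × ℝ := fun x => (x, y x, deriv y x) with hγdef
  have hγ1 : ContDiff ℝ 1 γ := contDiff_id.prodMk (hy1.prodMk hdy1)
  have hfd1 : ContDiff ℝ 1 (fderiv ℝ F) := hF.fderiv_right (by norm_num)
  set Q : ℝ → ℝ := fun x => fderiv ℝ F (γ x) (0, 1, 0) with hQdef
  set P : ℝ → ℝ := fun x => fderiv ℝ F (γ x) (0, 0, 1) with hPdef
  have hP1 : ContDiff ℝ 1 P := (hfd1.comp hγ1).clm_apply contDiff_const
  have hQ1 : ContDiff ℝ 1 Q := (hfd1.comp hγ1).clm_apply contDiff_const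
  have hQc : Continuous Q := hQ1.continuous
  have hPd : Differentiable ℝ P := hP1.differentiable (by norm_num)
  have hdPc : Continuous (deriv P) := hP1.continuous_deriv le_rfl
  have hycont : Continuous y := hy.continuous
  have hdycont : Continuous (deriv y) := hdy1.continuous
  have key : ∀ η : ℝ → ℝ, ContDiff ℝ 2 η → η a = 0 → η b = 0 →
      (∫ x in a..b, (Q x - deriv P x) * η x) = 0 := by
    intro η hη hηa hηb
    have hη' : ContDiff ℝ (1 + 1) η := by rw [h2eq]; exact hη
    have hdη1 : ContDiff ℝ 1 (deriv η) := (contDiff_succ_iff_deriv.1 hη').2.2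
    have hηdiff : Differentiable ℝ η := hη.differentiable (by norm_num)
    have hηc : Continuous η := hη.continuous
    have hdηc : Continuous (deriv η) := hdη1.continuous
    set Γ : ℝ → ℝ → ℝ × ℝ × ℝ :=
      fun t x => (x, y x + t * η x, deriv y x + t * deriv η x) with hΓdef
    set G : ℝ → ℝ → ℝ := fun t x => F (Γ t x) with hGdef
    set G' : ℝ → ℝ → ℝ := fun t x => fderiv ℝ F (Γ t x) (0, η x, deriv η x) with hG'def
    have hΓcont : Continuous (fun p : ℝ × ℝ => Γ p.1 p.2) := by
      refine continuous_snd.prodMk (Continuous.prodMk ?_ ?_)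
      · exact (hycont.comp continuous_snd).add
          (continuous_fst.mul (hηc.comp continuous_snd))
      · exact (hdycont.comp continuous_snd).add
          (continuous_fst.mul (hdηc.comp continuous_snd))
    have hG'cont : Continuous (fun p : ℝ × ℝ => G' p.1 p.2) := by
      refine Continuous.clm_apply ?_ ?_
      · exact (hF.continuous_fderiv (by norm_num)).comp hΓcont
      · exact continuous_const.prodMk
          ((hηc.comp continuous_snd).prodMk (hdηc.comp continuous_snd))
    obtain ⟨C, hC⟩ := ((isCompact_closedBall (0 : ℝ) 1).prod
      isCompact_uIcc).exists_bound_of_continuousOn hG'cont.continuousOn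
    have hGtcont : ∀ t, Continuous (G t) := fun t =>
      hF.continuous.comp (hΓcont.comp (continuous_const.prodMk continuous_id))
    have hG'tcont : ∀ t, Continuous (G' t) := fun t =>
      hG'cont.comp (continuous_const.prodMk continuous_id)
    have hdiffG : ∀ x t, HasDerivAt (fun t => G t x) (G' t x) t := by
      intro x t
      exact var_hasDerivAt F hFd x (y x) (deriv y x) (η x) (deriv η x) t
    have hderiv := intervalIntegral.hasDerivAt_integral_of_dominated_loc_of_deriv_le
      (μ := volume) (F := G) (F' := G') (x₀ := (0 : ℝ)) (a := a) (b := b)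
      (bound := fun _ => C) (ball_mem_nhds (0 : ℝ) one_pos)
      (Filter.Eventually.of_forall fun t => ((hGtcont t).aestronglyMeasurable))
      ((hGtcont 0).intervalIntegrable a b)
      ((hG'tcont 0).aestronglyMeasurable)
      (Filter.Eventually.of_forall fun x hx t ht =>
        hC (t, x) ⟨ball_subset_closedBall ht, Set.Ioc_subset_Icc_self hx⟩)
      (intervalIntegrable_const)
      (Filter.Eventually.of_forall fun x _ t _ => hdiffG x t)
    -- local minimum at t = 0
    obtain ⟨M1, hM1⟩ := isCompact_Icc.exists_bound_of_continuousOn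
      (hηc.continuousOn : ContinuousOn η (Icc a b))
    obtain ⟨M2, hM2⟩ := isCompact_Icc.exists_bound_of_continuousOn
      (hdηc.continuousOn : ContinuousOn (deriv η) (Icc a b))
    have hM1' : 0 ≤ M1 := le_trans (norm_nonneg _) (hM1 a ⟨le_rfl, hab.le⟩)
    have hM2' : 0 ≤ M2 := le_trans (norm_nonneg _) (hM2 a ⟨le_rfl, hab.le⟩)
    haveI : Nonempty (Icc a b) := Set.nonempty_Icc_subtype hab.le
    have hδ : 0 < ε / (M1 + M2 + 1) := by positivity
    have hloc : IsLocalMin (fun t => ∫ x in a..b, G t x) 0 := by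
      rw [IsLocalMin, IsMinFilter, Metric.eventually_nhds_iff]
      refine ⟨ε / (M1 + M2 + 1), hδ, fun t ht => ?_⟩
      rw [Real.dist_0_eq_abs] at ht
      set z : ℝ → ℝ := fun x => y x + t * η x with hzdef
      have hz2 : ContDiff ℝ 2 z := hy.add (contDiff_const.mul hη)
      have hdz : ∀ x, deriv z x = deriv y x + t * deriv η x := by
        intro x
        exact (((hydiff x).hasDerivAt).add (((hηdiff x).hasDerivAt).const_mul t)).deriv
      have hza : z a = A := by rw [hzdef]; simp [hηa, hA]
      have hzb : z b = B := by rw [hzdef]; simp [hηb, hB]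
      have hsup1 : (⨆ x : Icc a b, |y ↑x - z ↑x|) ≤ |t| * M1 := by
        refine ciSup_le fun x => ?_
        have e : y ↑x - z ↑x = -(t * η ↑x) := by rw [hzdef]; ring
        rw [e, abs_neg, abs_mul]
        exact mul_le_mul_of_nonneg_left
          (by simpa [Real.norm_eq_abs] using hM1 ↑x x.2) (abs_nonneg t)
      have hsup2 : (⨆ x : Icc a b, |deriv y ↑x - deriv z ↑x|) ≤ |t| * M2 := by
        refine ciSup_le fun x => ?_
        have e : deriv y ↑x - deriv z ↑x = -(t * deriv η ↑x) := by rw [hdz]; ring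
        rw [e, abs_neg, abs_mul]
        exact mul_le_mul_of_nonneg_left
          (by simpa [Real.norm_eq_abs] using hM2 ↑x x.2) (abs_nonneg t)
      have hlt : |t| * M1 + |t| * M2 < ε := by
        have h1 : |t| * (M1 + M2 + 1) < (ε / (M1 + M2 + 1)) * (M1 + M2 + 1) := by
          apply mul_lt_mul_of_pos_right ht; linarith
        rw [div_mul_cancel₀ _ (by linarith : M1 + M2 + 1 ≠ 0)] at h1
        nlinarith [abs_nonneg t]
      have hle := hmin z hz2 hza hzb
        (lt_of_le_of_lt (add_le_add hsup1 hsup2) hlt)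
      have e0 : (∫ x in a..b, G 0 x) = ∫ x in a..b, F (x, y x, deriv y x) := by
        refine intervalIntegral.integral_congr fun x _ => ?_
        simp [hGdef, hΓdef]
      have et : (∫ x in a..b, G t x) = ∫ x in a..b, F (x, z x, deriv z x) := by
        refine intervalIntegral.integral_congr fun x _ => ?_
        rw [hGdef, hdz x]
      rw [e0, et]
      exact hle
    have hzero : (∫ x in a..b, G' 0 x) = 0 := hloc.hasDerivAt_eq_zero hderiv.2
    have hrw : (∫ x in a..b, G' 0 x)
        = ∫ x in a..b, (Q x * η x + P x * deriv η x) := by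
      refine intervalIntegral.integral_congr fun x _ => ?_
      have e : Γ 0 x = γ x := by simp [hΓdef, hγdef]
      rw [hG'def]
      simp only [e]
      rw [fderiv_dir F (γ x) (η x) (deriv η x), hQdef, hPdef]
      ring
    have hibp : (∫ x in a..b, P x * deriv η x) = - ∫ x in a..b, deriv P x * η x := by
      have h := intervalIntegral.integral_mul_deriv_eq_deriv_mul
        (u := P) (v := η) (u' := deriv P) (v' := deriv η) (a := a) (b := b)
        (fun x _ => (hPd x).hasDerivAt) (fun x _ => (hηdiff x).hasDerivAt)
        (hdPc.intervalIntegrable a b) (hdηc.intervalIntegrable a b)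
      rw [h, hηa, hηb]; ring
    have hsplit : (∫ x in a..b, (Q x * η x + P x * deriv η x))
        = (∫ x in a..b, Q x * η x) + ∫ x in a..b, P x * deriv η x :=
      intervalIntegral.integral_add ((hQc.mul hηc).intervalIntegrable a b)
        (((hP1.continuous).mul hdηc).intervalIntegrable a b)
    have hfin : (∫ x in a..b, (Q x - deriv P x) * η x)
        = (∫ x in a..b, Q x * η x) - ∫ x in a..b, deriv P x * η x := by
      rw [← intervalIntegral.integral_sub (f := fun x => Q x * η x) (g := fun x => deriv P x * η x) ((hQc.mul hηc).intervalIntegrable a b)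
        ((hdPc.mul hηc).intervalIntegrable a b)]
      refine intervalIntegral.integral_congr fun x _ => ?_
      ring
    rw [hfin]
    have := hrw ▸ hzero
    linarith [hsplit, hibp, this]
  have hcont : Continuous (fun x => Q x - deriv P x) := hQc.sub hdPc
  have hzero := fund_lemma a b hab _ hcont key
  intro x hx
  have e1 : deriv (fun s => F (x, s, deriv y x)) (y x) = Q x :=
    (slice2_hasDerivAt F hFd x (y x) (deriv y x)).deriv
  have e2 : (fun t => deriv (fun p => F (t, y t, p)) (deriv y t)) = P := by
    funext t
    exact (slice3_hasDerivAt F hFd t (y t) (deriv y t)).deriv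
  rw [e1, e2]
  exact hzero x hx
end
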